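/- Let $A \in \mathbb{C}^{p\times p}$ with $\rho(A)<1$, $\Gamma_A = \sum_n A^nA^{*n}$, $L_A^{-1} = A^*A + \Gamma_A^{-1}$. Define $\mathcal{A} = A^*$, $\mathcal{B} = \Gamma_A^{-1}L_A^{1/2}$, $\mathcal{C} = I_p$, $\mathcal{D} = -AL_A^{1/2}$. Then the block matrix $\begin{pmatrix}\mathcal{A}&\mathcal{B}\\ \mathcal{C}&\mathcal{D}\end{pmatrix}$ satisfies $\begin{pmatrix}\mathcal{A}&\mathcal{B}\\ \mathcal{C}&\mathcal{D}\end{pmatrix}^* \begin{pmatrix}\Gamma_A&0\\0&I_p\end{pmatrix} \begin{pmatrix}\mathcal{A}&\mathcal{B}\\ \mathcal{C}&\mathcal{D}\end{pmatrix} = \begin{pmatrix}\Gamma_A&0\\0&I_p\end{pmatrix}$. -/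

import Mathlib

open scoped ENNReal Matrix ComplexOrder

attribute [local instance] Matrix.linftyOpNormedRing Matrix.linftyOpNormedAlgebra

/-- The square root of a positive semidefinite matrix, as defined in Mathlib (December 2024),
since removed: `U * diagonal (√ ∘ eigenvalues) * U*` with `U` the eigenvector unitary. -/
noncomputable def Matrix.PosSemidef.sqrt {n 𝕜 : Type*} [Fintype n] [RCLike 𝕜] [DecidableEq n]
    {A : Matrix n n 𝕜} (hA : A.PosSemidef) : Matrix n n 𝕜 :=
  hA.1.eigenvectorUnitary.1 * Matrix.diagonal ((↑) ∘ (fun x : ℝ => √x) ∘ hA.1.eigenvalues) *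
    (star hA.1.eigenvectorUnitary : Matrix n n 𝕜)

/-! Since `ρ(A) < 1` and `ρ(A*) = ρ(A)`, Gelfand's formula makes `∑ Aⁿ A*ⁿ` converge, and
shifting the summation index gives the Stein equation `Γ = I + A Γ A*`; in particular `Γ ≥ I` is
invertible. With `S = L^{1/2}` hermitian and `S (A*A + Γ⁻¹) S = I`, the four blocks of
`M* diag(Γ, I) M` are `A Γ A* + I = Γ`, `A Γ Γ⁻¹ S - A S = 0`, its adjoint, and
`S Γ⁻¹ Γ Γ⁻¹ S + S A* A S = I`. -/

open Filter

section SpectralRadius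

variable {A : Type*} [NormedRing A] [NormedAlgebra ℂ A]

theorem spectralRadius_star [StarRing A] [StarModule ℂ A] (a : A) :
    spectralRadius ℂ (star a) = spectralRadius ℂ a := by
  simp only [spectralRadius, spectrum.map_star]
  refine le_antisymm (iSup₂_le fun k hk => ?_) (iSup₂_le fun k hk => ?_)
  · simpa using le_iSup₂ (f := fun k (_ : k ∈ spectrum ℂ a) => (‖k‖₊ : ℝ≥0∞)) (star k) hk
  · simpa using le_iSup₂ (f := fun k (_ : k ∈ star (spectrum ℂ a)) => (‖k‖₊ : ℝ≥0∞)) (star k)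
      (by simpa using hk)

variable [CompleteSpace A]

theorem eventually_norm_pow_le_of_spectralRadius_lt {a : A} {r : NNReal}
    (h : spectralRadius ℂ a < r) : ∀ᶠ n : ℕ in atTop, ‖a ^ n‖ ≤ (r : ℝ) ^ n := by
  filter_upwards
    [(spectrum.pow_nnnorm_pow_one_div_tendsto_nhds_spectralRadius a).eventually_lt_const h,
      eventually_gt_atTop 0] with n hn hn0
  have h1 : ((‖a ^ n‖₊ : ℝ≥0∞) ^ (1 / (n : ℝ))) ^ (n : ℝ) ≤ (r : ℝ≥0∞) ^ (n : ℝ) :=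
    ENNReal.rpow_le_rpow hn.le (Nat.cast_nonneg n)
  rw [← ENNReal.rpow_mul, one_div_mul_cancel (by exact_mod_cast hn0.ne'),
    ENNReal.rpow_one, ENNReal.rpow_natCast, ← ENNReal.coe_pow, ENNReal.coe_le_coe] at h1
  exact_mod_cast h1

theorem summable_pow_mul_pow_of_spectralRadius_lt_one {a b : A}
    (ha : spectralRadius ℂ a < 1) (hb : spectralRadius ℂ b < 1) :
    Summable fun n : ℕ => a ^ n * b ^ n := by
  obtain ⟨r, hr, hr1⟩ := ENNReal.lt_iff_exists_nnreal_btwn.mp (max_lt ha hb)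
  have hr1 : (r : ℝ) < 1 := by exact_mod_cast hr1
  refine .of_norm_bounded_eventually (g := fun n => ((r : ℝ) * r) ^ n)
    (summable_geometric_of_lt_one (by positivity) (by nlinarith [r.coe_nonneg])) ?_
  rw [Nat.cofinite_eq_atTop]
  filter_upwards
    [eventually_norm_pow_le_of_spectralRadius_lt ((le_max_left _ _).trans_lt hr),
      eventually_norm_pow_le_of_spectralRadius_lt ((le_max_right _ _).trans_lt hr)]
    with n hna hnb
  calc ‖a ^ n * b ^ n‖ ≤ ‖a ^ n‖ * ‖b ^ n‖ := norm_mul_le _ _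
    _ ≤ (r : ℝ) ^ n * (r : ℝ) ^ n := mul_le_mul hna hnb (norm_nonneg _) (by positivity)
    _ = ((r : ℝ) * r) ^ n := (mul_pow _ _ _).symm

end SpectralRadius

theorem Summable.tsum_pow_mul_pow_eq_one_add {R : Type*} [Ring R] [TopologicalSpace R]
    [IsTopologicalRing R] [T2Space R] {a b : R} (h : Summable fun n : ℕ => a ^ n * b ^ n) :
    ∑' n : ℕ, a ^ n * b ^ n = 1 + a * (∑' n : ℕ, a ^ n * b ^ n) * b := by
  have hsucc (n : ℕ) : a ^ (n + 1) * b ^ (n + 1) = a * (a ^ n * b ^ n) * b := by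
    rw [pow_succ', pow_succ, mul_assoc, mul_assoc, mul_assoc]
  conv_lhs => rw [h.tsum_eq_zero_add]
  simp only [pow_zero, one_mul, hsucc]
  rw [(h.mul_left a).tsum_mul_right, h.tsum_mul_left]

namespace Matrix

section RCLike

variable {n 𝕜 : Type*} [Fintype n] [RCLike 𝕜]

theorem PosSemidef.of_hasSum {ι : Type*} {f : ι → Matrix n n 𝕜} {a : Matrix n n 𝕜}
    (hf : HasSum f a) (h : ∀ i, (f i).PosSemidef) : a.PosSemidef := by
  have hherm : aᴴ = a := hf.matrix_conjTranspose.unique (by simpa only [(h _).1.eq] using hf)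
  refine .of_dotProduct_mulVec_nonneg hherm fun x => ?_
  let q : Matrix n n 𝕜 →+ 𝕜 :=
    AddMonoidHom.mk' (fun M => star x ⬝ᵥ M *ᵥ x) fun M N => by simp [add_mulVec, dotProduct_add]
  have hq : Continuous q :=
    continuous_const.dotProduct (continuous_id.matrix_mulVec continuous_const)
  exact (hf.map q hq).nonneg fun i => (h i).dotProduct_mulVec_nonneg x

open scoped MatrixOrder

variable [DecidableEq n] {A : Matrix n n 𝕜}

theorem PosSemidef.sqrt_eq_cfcSqrt (hA : A.PosSemidef) : hA.sqrt = CFC.sqrt A := by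
  rw [CFC.sqrt_eq_real_sqrt A hA.nonneg, cfcₙ_eq_cfc, hA.1.cfc_eq]
  rfl

theorem PosSemidef.sqrt_mul_sqrt (hA : A.PosSemidef) : hA.sqrt * hA.sqrt = A := by
  rw [hA.sqrt_eq_cfcSqrt, CFC.sqrt_mul_sqrt_self A hA.nonneg]

theorem PosSemidef.isHermitian_sqrt (hA : A.PosSemidef) : hA.sqrt.IsHermitian := by
  rw [hA.sqrt_eq_cfcSqrt]
  exact (nonneg_iff_posSemidef.mp (CFC.sqrt_nonneg A)).1

end RCLike

section CommRing

variable {n R : Type*} [Fintype n] [DecidableEq n] [CommRing R]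

theorem mul_inv_mul_eq_one_of_mul_self_eq {S L : Matrix n n R} (hSS : S * S = L)
    (hL : IsUnit L.det) : S * L⁻¹ * S = 1 := by
  have hS : IsUnit S.det := isUnit_of_mul_isUnit_left (by rwa [← det_mul, hSS])
  rw [← hSS, mul_inv_rev, mul_assoc, nonsing_inv_mul_cancel_right _ _ hS, mul_nonsing_inv _ hS]

theorem conjTranspose_fromBlocks_mul_fromBlocks_mul_eq_of_stein [StarRing R]
    {A Γ S : Matrix n n R} (hΓ : Γ.IsHermitian) (hΓdet : IsUnit Γ.det) (hS : S.IsHermitian)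
    (hstein : Γ = 1 + A * Γ * Aᴴ) (hSS : S * (Aᴴ * A + Γ⁻¹) * S = 1) :
    (fromBlocks Aᴴ (Γ⁻¹ * S) 1 (-(A * S)))ᴴ * fromBlocks Γ 0 0 1 *
        fromBlocks Aᴴ (Γ⁻¹ * S) 1 (-(A * S)) = fromBlocks Γ 0 0 1 := by
  have hΓinv : Γ⁻¹ᴴ = Γ⁻¹ := by rw [conjTranspose_nonsing_inv, hΓ.eq]
  simp only [fromBlocks_conjTranspose, fromBlocks_multiply, conjTranspose_conjTranspose,
    conjTranspose_one, conjTranspose_mul, conjTranspose_neg, hS.eq, hΓinv, mul_zero, add_zero,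
    zero_add, mul_one, one_mul, mul_assoc, mul_nonsing_inv_cancel_left _ _ hΓdet,
    nonsing_inv_mul_cancel_left _ _ hΓdet, add_neg_cancel, neg_mul, mul_neg, neg_neg]
  congr 1
  · rw [add_comm, ← mul_assoc, ← hstein]
  · rw [← hSS, mul_add, add_mul, add_comm]
    simp only [mul_assoc]

end CommRing

end Matrix

/-- The realization `(𝒜, ℬ, 𝒞, 𝒟) = (A*, Γ⁻¹ L^{1/2}, I, -A L^{1/2})` of the Blaschke
factor satisfies `M* diag(Γ, I) M = diag(Γ, I)` where `M` is the block matrix. -/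
theorem stmt10 {p : ℕ} (A : Matrix (Fin p) (Fin p) ℂ)
    (hA : spectralRadius ℂ A < 1)
    (Γ : Matrix (Fin p) (Fin p) ℂ) (hΓ : Γ = ∑' n : ℕ, A ^ n * Aᴴ ^ n)
    (L : Matrix (Fin p) (Fin p) ℂ) (hL : L⁻¹ = Aᴴ * A + Γ⁻¹)
    (hLpsd : L.PosSemidef) :
    (Matrix.fromBlocks Aᴴ (Γ⁻¹ * hLpsd.sqrt) 1 (-(A * hLpsd.sqrt)))ᴴ *
        Matrix.fromBlocks Γ 0 0 1 *
        Matrix.fromBlocks Aᴴ (Γ⁻¹ * hLpsd.sqrt) 1 (-(A * hLpsd.sqrt)) =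
      Matrix.fromBlocks Γ 0 0 1 := by
  have hsum : Summable fun n : ℕ => A ^ n * Aᴴ ^ n :=
    summable_pow_mul_pow_of_spectralRadius_lt_one hA
      (by rwa [← Matrix.star_eq_conjTranspose, spectralRadius_star])
  have hstein : Γ = 1 + A * Γ * Aᴴ := hΓ ▸ hsum.tsum_pow_mul_pow_eq_one_add
  have hΓpsd : Γ.PosSemidef := hΓ ▸ .of_hasSum hsum.hasSum fun n => by
    simpa only [Matrix.conjTranspose_pow] using Matrix.posSemidef_self_mul_conjTranspose (A ^ n)
  have hΓpd : Γ.PosDef :=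
    hstein ▸ Matrix.PosDef.one.add_posSemidef (hΓpsd.mul_mul_conjTranspose_same A)
  have hLinvpd : L⁻¹.PosDef :=
    hL ▸ hΓpd.inv.posSemidef_add (Matrix.posSemidef_conjTranspose_mul_self A)
  have hLdet : IsUnit L.det :=
    (Matrix.isUnit_iff_isUnit_det L).mp (Matrix.isUnit_nonsing_inv_iff.mp hLinvpd.isUnit)
  exact Matrix.conjTranspose_fromBlocks_mul_fromBlocks_mul_eq_of_stein hΓpsd.1
    ((Matrix.isUnit_iff_isUnit_det Γ).mp hΓpd.isUnit) hLpsd.isHermitian_sqrt hstein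
    (hL ▸ Matrix.mul_inv_mul_eq_one_of_mul_self_eq hLpsd.sqrt_mul_sqrt hLdet)
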